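/- Let k be an integer, and let (X,d), (X̂,d̂) be Q(k)-objects over ℤ such that every X_{i,j} and every X̂_{i,j} is a free abelian group; let e, ê be their leading parts. Let γ : ⊕_{i,j} X_{i,j} → ⊕_{i,j} X̂_{i,j} be a group homomorphism with γ ∘ d_j = d̂_j ∘ γ and γ(X_{i,j}) ⊆ ⊕_{l≥i} X̂_{l,j}, with δ_{i,j} := pr̂_{i,j} ∘ γ|_{X_{i,j}}, and assume that for all i,j the map ker e_{i,j}/im e_{i−1,j−k} → ker ê_{i,j}/im ê_{i−1,j−k} induced by δ is an isomorphism. Then for every abelian group M: (X ⊗ M, d ⊗ id_M) and (X̂ ⊗ M, d̂ ⊗ id_M) are Q(k)-objects over ℤ with leading parts e ⊗ id_M and ê ⊗ id_M, the map γ ⊗ id_M satisfies the same compatibilities, and for all i,j the map ker(e_{i,j} ⊗ id_M)/im(e_{i−1,j−k} ⊗ id_M) → ker(ê_{i,j} ⊗ id_M)/im(ê_{i−1,j−k} ⊗ id_M) induced by δ ⊗ id_M is an isomorphism. -/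

import Mathlib

open DirectSum TensorProduct

/-- The leading part `e_{i,j} := pr_{i+1,j+k} ∘ d_j ∘ incl_{i,j} : X_{i,j} → X_{i+1,j+k}`
of a `Q(k)`-object `(X, d)`. -/
noncomputable def leadingPart (R : Type*) [CommRing R] (k : ℤ)
    (X : ℤ → ℤ → Type*) [∀ i j, AddCommGroup (X i j)] [∀ i j, Module R (X i j)]
    (d : ∀ j : ℤ, (⨁ i, X i j) →ₗ[R] ⨁ i, X i (j + k)) (i j : ℤ) :
    X i j →ₗ[R] X (i + 1) (j + k) :=
  (DirectSum.component R ℤ (fun l => X l (j + k)) (i + 1)) ∘ₗ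
    (d j) ∘ₗ (DirectSum.lof R ℤ (fun l => X l j) i)

/-- The component `δ_{i,j} := pr̂_{i,j} ∘ γ ∘ incl_{i,j} : X_{i,j} → X̂_{i,j}`
of a morphism `γ` of `Q(k)`-objects. -/
noncomputable def diagPart (R : Type*) [CommRing R]
    (X Y : ℤ → ℤ → Type*) [∀ i j, AddCommGroup (X i j)] [∀ i j, Module R (X i j)]
    [∀ i j, AddCommGroup (Y i j)] [∀ i j, Module R (Y i j)]
    (γ : ∀ j : ℤ, (⨁ i, X i j) →ₗ[R] ⨁ i, Y i j) (i j : ℤ) :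
    X i j →ₗ[R] Y i j :=
  (DirectSum.component R ℤ (fun l => Y l j) i) ∘ₗ
    (γ j) ∘ₗ (DirectSum.lof R ℤ (fun l => X l j) i)

/-- `d ⊗ id_M`, viewed as a map `⨁ i (X_{i,j} ⊗ M) → ⨁ i (X_{i,j+k} ⊗ M)` via the canonical
identification `(⨁ i X_{i,j}) ⊗ M ≃ ⨁ i (X_{i,j} ⊗ M)`. -/
noncomputable def tensorQ (k : ℤ)
    (X : ℤ → ℤ → Type) [∀ i j, AddCommGroup (X i j)]
    (d : ∀ j : ℤ, (⨁ i, X i j) →ₗ[ℤ] ⨁ i, X i (j + k))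
    (M : Type) [AddCommGroup M] (j : ℤ) :
    (⨁ i, (X i j) ⊗[ℤ] M) →ₗ[ℤ] ⨁ i, (X i (j + k)) ⊗[ℤ] M :=
  (TensorProduct.directSumLeft ℤ ℤ (fun i => X i (j + k)) M).toLinearMap ∘ₗ
    (LinearMap.rTensor M (d j)) ∘ₗ
      (TensorProduct.directSumLeft ℤ ℤ (fun i => X i j) M).symm.toLinearMap

/-- `γ ⊗ id_M`, viewed as a map `⨁ i (X_{i,j} ⊗ M) → ⨁ i (X̂_{i,j} ⊗ M)`. -/
noncomputable def tensorG
    (X Y : ℤ → ℤ → Type) [∀ i j, AddCommGroup (X i j)] [∀ i j, AddCommGroup (Y i j)]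
    (γ : ∀ j : ℤ, (⨁ i, X i j) →ₗ[ℤ] ⨁ i, Y i j)
    (M : Type) [AddCommGroup M] (j : ℤ) :
    (⨁ i, (X i j) ⊗[ℤ] M) →ₗ[ℤ] ⨁ i, (Y i j) ⊗[ℤ] M :=
  (TensorProduct.directSumLeft ℤ ℤ (fun i => Y i j) M).toLinearMap ∘ₗ
    (LinearMap.rTensor M (γ j)) ∘ₗ
      (TensorProduct.directSumLeft ℤ ℤ (fun i => X i j) M).symm.toLinearMap

/-! Along each diagonal `(i + t, j + t k)` the leading parts form chain complexes `e`, `ê` of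
free abelian groups, and the filtration conditions make `δ` a chain map between them, a
quasi-isomorphism by hypothesis. Its mapping cone is then an exact complex of flat groups. Over
`ℤ` subgroups of flat groups are flat, so every cone differential has flat image, and an exact
complex whose differentials have flat images stays exact after `⊗ M`. As the cone of `δ ⊗ id_M`
is the tensored cone, `δ ⊗ id_M` is again a quasi-isomorphism. The claims about `d ⊗ id_M` and
`γ ⊗ id_M` follow by tensoring componentwise. -/

theorem Function.Exact.rTensor_of_flat_range {R A B C D : Type*} [CommRing R]
    [AddCommGroup A] [AddCommGroup B] [AddCommGroup C] [AddCommGroup D]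
    [Module R A] [Module R B] [Module R C] [Module R D]
    {f : A →ₗ[R] B} {g : B →ₗ[R] C} {h : C →ₗ[R] D} (hfg : Function.Exact f g)
    (hgh : Function.Exact g h) [Module.Flat R (LinearMap.range h)]
    (M : Type*) [AddCommGroup M] [Module R M] :
    Function.Exact (f.rTensor M) (g.rTensor M) := by
  -- `0 → ker h → C → range h → 0` stays exact under `⊗ M` since `range h` is flat.
  let g' : B →ₗ[R] LinearMap.ker h := g.codRestrict _ hgh.apply_apply_eq_zero
  have hg' : Function.Surjective g' := fun c => by
    obtain ⟨b, hb⟩ := (hgh c).1 c.2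
    exact ⟨b, Subtype.ext hb⟩
  have hker : Function.Injective ((LinearMap.ker h).subtype.rTensor M) :=
    (LinearMap.lTensor_inj_iff_rTensor_inj _ _).mp <|
      LinearMap.lTensor_injective_of_exact_of_flat h.rangeRestrict h.surjective_rangeRestrict
        _ (LinearMap.ker h).injective_subtype
        (LinearMap.exact_iff.mpr (by rw [LinearMap.ker_rangeRestrict, Submodule.range_subtype])) M
  have hfg' : Function.Exact f g' := fun b => by
    rw [← hfg b, Subtype.ext_iff]; rfl
  have := (rTensor_exact M hfg' hg').comp_injective _ hker (map_zero _)
  rwa [← LinearMap.coe_comp, ← LinearMap.rTensor_comp] at this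

section Cone

variable {R : Type*} [CommRing R] {ι : Type*} (s : ι → ι) {C D : ι → Type*}
  [∀ p, AddCommGroup (C p)] [∀ p, Module R (C p)] [∀ p, AddCommGroup (D p)] [∀ p, Module R (D p)]
  (d : ∀ p, C p →ₗ[R] C (s p)) (e : ∀ p, D p →ₗ[R] D (s p)) (φ : ∀ p, C p →ₗ[R] D p)

/- Complexes are indexed by a type `ι` with a successor map `s`, so that the diagonal complexes
of a `Q(k)`-object need no casts (`ι = ℤ × ℤ`, `s (i, j) = (i + 1, j + k)`). The predicates
below concern the homology at `s p`, and the cone in degree `p` is `C (s p) × D p`. -/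

def HomologyInjectiveAt (p : ι) : Prop :=
  ∀ x ∈ LinearMap.ker (d (s p)), φ (s p) x ∈ LinearMap.range (e p) → x ∈ LinearMap.range (d p)

def HomologySurjectiveAt (p : ι) : Prop :=
  ∀ y ∈ LinearMap.ker (e (s p)), ∃ x ∈ LinearMap.ker (d (s p)),
    φ (s p) x - y ∈ LinearMap.range (e p)

def HomologyBijectiveAt (p : ι) : Prop :=
  HomologyInjectiveAt s d e φ p ∧ HomologySurjectiveAt s d e φ p

def coneDiff (p : ι) : C (s p) × D p →ₗ[R] C (s (s p)) × D (s p) :=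
  LinearMap.prod (-(d (s p) ∘ₗ LinearMap.fst R _ _))
    (φ (s p) ∘ₗ LinearMap.fst R _ _ + e p ∘ₗ LinearMap.snd R _ _)

@[simp]
lemma coneDiff_apply (p : ι) (v : C (s p) × D p) :
    coneDiff s d e φ p v = (-d (s p) v.1, φ (s p) v.1 + e p v.2) := rfl

variable {s d e φ}

lemma homology_of_exact_coneDiff {q : ι}
    (h : Function.Exact (coneDiff s d e φ q) (coneDiff s d e φ (s q))) :
    HomologyInjectiveAt s d e φ (s q) ∧ HomologySurjectiveAt s d e φ q := by
  constructor
  · rintro x hx ⟨y, hy⟩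
    obtain ⟨⟨a, z⟩, haz⟩ := (h (x, -y)).1 (by simp_all)
    exact ⟨-a, by simpa using congrArg Prod.fst haz⟩
  · intro y hy
    obtain ⟨⟨u, z⟩, huz⟩ := (h (0, y)).1 (by simp_all)
    simp only [coneDiff_apply, Prod.mk.injEq, neg_eq_zero] at huz
    exact ⟨u, huz.1, -z, by rw [map_neg, ← huz.2]; abel⟩

lemma exact_coneDiff (hd : ∀ p, d (s p) ∘ₗ d p = 0) (he : ∀ p, e (s p) ∘ₗ e p = 0)
    (hφ : ∀ p, φ (s p) ∘ₗ d p = e p ∘ₗ φ p) {q : ι}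
    (hinj : HomologyInjectiveAt s d e φ (s q)) (hsurj : HomologySurjectiveAt s d e φ q) :
    Function.Exact (coneDiff s d e φ q) (coneDiff s d e φ (s q)) := by
  refine Function.Exact.of_comp_of_mem_range (funext fun ⟨a, y⟩ => ?_) ?_
  · have hda := LinearMap.congr_fun (hd (s q)) a
    have hey := LinearMap.congr_fun (he q) y
    have hφa := LinearMap.congr_fun (hφ (s q)) a
    simp only [LinearMap.comp_apply, LinearMap.zero_apply] at hda hey hφa
    simp [hda, hey, hφa]
  rintro ⟨c, y⟩ hcy
  simp only [coneDiff_apply, Prod.mk_eq_zero, neg_eq_zero] at hcy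
  obtain ⟨a, rfl⟩ := hinj c hcy.1 ⟨-y, by rw [map_neg, eq_neg_of_add_eq_zero_left hcy.2]⟩
  obtain ⟨u, hu, z, hz⟩ := hsurj (y + φ (s q) a) (by
    rw [LinearMap.mem_ker, map_add, ← LinearMap.comp_apply, ← hφ, add_comm]; exact hcy.2)
  refine ⟨(u - a, -z), ?_⟩
  simp only [coneDiff_apply, map_sub, map_neg, hz, LinearMap.mem_ker.mp hu]
  ext <;> simp

variable (M : Type*) [AddCommGroup M] [Module R M]

lemma coneDiff_rTensor_comp_prodLeft (q : ι) :
    coneDiff s (fun p => (d p).rTensor M) (fun p => (e p).rTensor M) (fun p => (φ p).rTensor M) q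
        ∘ₗ (prodLeft R R (C (s q)) (D q) M).toLinearMap
      = (prodLeft R R (C (s (s q))) (D (s q)) M).toLinearMap ∘ₗ (coneDiff s d e φ q).rTensor M := by
  ext <;> simp [neg_tmul]

variable [IsDedekindDomain R] [∀ p, Module.Flat R (C p)] [∀ p, Module.Flat R (D p)]

lemma exact_rTensor_coneDiff {q : ι}
    (h₁ : Function.Exact (coneDiff s d e φ q) (coneDiff s d e φ (s q)))
    (h₂ : Function.Exact (coneDiff s d e φ (s q)) (coneDiff s d e φ (s (s q)))) :
    Function.Exact
      (coneDiff s (fun p => (d p).rTensor M) (fun p => (e p).rTensor M)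
        (fun p => (φ p).rTensor M) q)
      (coneDiff s (fun p => (d p).rTensor M) (fun p => (e p).rTensor M)
        (fun p => (φ p).rTensor M) (s q)) :=
  (Function.Exact.iff_of_ladder_linearEquiv (coneDiff_rTensor_comp_prodLeft M q)
    (coneDiff_rTensor_comp_prodLeft M (s q))).mpr (h₁.rTensor_of_flat_range h₂ M)

theorem homologyBijectiveAt_rTensor (hs : Function.Surjective s)
    (hd : ∀ p, d (s p) ∘ₗ d p = 0) (he : ∀ p, e (s p) ∘ₗ e p = 0)
    (hφ : ∀ p, φ (s p) ∘ₗ d p = e p ∘ₗ φ p) (h : ∀ p, HomologyBijectiveAt s d e φ p) (p : ι) :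
    HomologyBijectiveAt s (fun p => (d p).rTensor M) (fun p => (e p).rTensor M)
      (fun p => (φ p).rTensor M) p := by
  have hcone q := exact_coneDiff hd he hφ (h (s q)).1 (h q).2
  have hconeM q := exact_rTensor_coneDiff M (hcone q) (hcone (s q))
  obtain ⟨q, rfl⟩ := hs p
  exact ⟨(homology_of_exact_coneDiff (hconeM q)).1, (homology_of_exact_coneDiff (hconeM (s q))).2⟩

end Cone

section Filtration

variable {R : Type*} [CommRing R] {X Y : ℤ → Type*} [∀ i, AddCommGroup (X i)]
  [∀ i, Module R (X i)] [∀ i, AddCommGroup (Y i)] [∀ i, Module R (Y i)]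
  {F : (⨁ i, X i) →ₗ[R] ⨁ i, Y i} {r : ℤ}

lemma DirectSum.map_apply_eq_zero_of_lt
    (hF : ∀ i (x : X i) l, l < i + r → F (lof R ℤ X i x) l = 0)
    {a : ⨁ i, X i} {m : ℤ} (ha : ∀ l < m, a l = 0) {l : ℤ} (hl : l < m + r) : F a l = 0 := by
  classical
  rw [← DirectSum.sum_support_of a, map_sum, DFinsupp.finsetSum_apply]
  refine Finset.sum_eq_zero fun i _ => ?_
  by_cases hi : i < m
  · rw [ha i hi, map_zero, map_zero, DirectSum.zero_apply]
  · exact hF i (a i) l (by omega)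

lemma DirectSum.map_apply_eq_map_lof_of_lt
    (hF : ∀ i (x : X i) l, l < i + r → F (lof R ℤ X i x) l = 0)
    {a : ⨁ i, X i} {m : ℤ} (ha : ∀ l < m, a l = 0) :
    F a (m + r) = F (lof R ℤ X m (a m)) (m + r) := by
  classical
  have hrest : F (a - lof R ℤ X m (a m)) (m + r) = 0 := by
    refine map_apply_eq_zero_of_lt hF (m := m + 1) (fun l hl => ?_) (by omega)
    rcases lt_or_eq_of_le (Int.lt_add_one_iff.mp hl) with hl | rfl
    · simp [ha l hl, lof_eq_of, of_eq_of_ne _ _ _ hl.ne]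
    · simp [lof_eq_of]
  rwa [map_sub, DFinsupp.sub_apply, sub_eq_zero] at hrest

end Filtration

section QObject

variable {R : Type*} [CommRing R] (k : ℤ) {X Y : ℤ → ℤ → Type*}
  [∀ i j, AddCommGroup (X i j)] [∀ i j, Module R (X i j)]
  [∀ i j, AddCommGroup (Y i j)] [∀ i j, Module R (Y i j)]
  {d : ∀ j : ℤ, (⨁ i, X i j) →ₗ[R] ⨁ i, X i (j + k)}
  {dh : ∀ j : ℤ, (⨁ i, Y i j) →ₗ[R] ⨁ i, Y i (j + k)}

lemma leadingPart_comp_leadingPart (hdd : ∀ j, d (j + k) ∘ₗ d j = 0)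
    (hfilt : ∀ (j i : ℤ) (x : X i j) (l : ℤ), l ≤ i → (d j (lof R ℤ (fun l => X l j) i x)) l = 0)
    (i j : ℤ) :
    leadingPart R k X d (i + 1) (j + k) ∘ₗ leadingPart R k X d i j = 0 := by
  ext x : 1
  have hdx : d (j + k) (d j (lof R ℤ _ i x)) = 0 := LinearMap.congr_fun (hdd j) _
  show d (j + k) (lof R ℤ _ (i + 1) (d j (lof R ℤ _ i x) (i + 1))) (i + 1 + 1) = 0
  rw [← map_apply_eq_map_lof_of_lt (fun i x l hl => hfilt (j + k) i x l (by omega))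
    (fun l hl => hfilt j i x l (by omega)), hdx, DirectSum.zero_apply]

lemma diagPart_comp_leadingPart
    (hfilt : ∀ (j i : ℤ) (x : X i j) (l : ℤ), l ≤ i → (d j (lof R ℤ (fun l => X l j) i x)) l = 0)
    (hfilth : ∀ (j i : ℤ) (x : Y i j) (l : ℤ), l ≤ i →
      (dh j (lof R ℤ (fun l => Y l j) i x)) l = 0)
    {γ : ∀ j : ℤ, (⨁ i, X i j) →ₗ[R] ⨁ i, Y i j} (hγd : ∀ j, γ (j + k) ∘ₗ d j = dh j ∘ₗ γ j)
    (hγfilt : ∀ (j i : ℤ) (x : X i j) (l : ℤ), l < i →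
      (γ j (lof R ℤ (fun l => X l j) i x)) l = 0)
    (i j : ℤ) :
    diagPart R X Y γ (i + 1) (j + k) ∘ₗ leadingPart R k X d i j
      = leadingPart R k Y dh i j ∘ₗ diagPart R X Y γ i j := by
  ext x : 1
  show γ (j + k) (lof R ℤ _ (i + 1) (d j (lof R ℤ _ i x) (i + 1))) (i + 1)
    = dh j (lof R ℤ _ i (γ j (lof R ℤ _ i x) i)) (i + 1)
  have hγ := map_apply_eq_map_lof_of_lt (r := 0) (m := i + 1)
    (fun i x l hl => hγfilt (j + k) i x l (by omega)) (fun l hl => hfilt j i x l (by omega))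
  have hdh := map_apply_eq_map_lof_of_lt (r := 1) (m := i)
    (fun i x l hl => hfilth j i x l (by omega)) (fun l hl => hγfilt j i x l hl)
  rw [add_zero] at hγ
  rw [← hγ, ← hdh, ← LinearMap.comp_apply, hγd, LinearMap.comp_apply]

end QObject

section DirectSumRTensor

variable {R : Type*} [CommRing R] {ι : Type*} [DecidableEq ι]
  {X Y Z : ι → Type*} [∀ i, AddCommGroup (X i)] [∀ i, Module R (X i)]
  [∀ i, AddCommGroup (Y i)] [∀ i, Module R (Y i)] [∀ i, AddCommGroup (Z i)] [∀ i, Module R (Z i)]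
  (M : Type*) [AddCommGroup M] [Module R M]

noncomputable def directSumRTensor (F : (⨁ i, X i) →ₗ[R] ⨁ i, Y i) :
    (⨁ i, X i ⊗[R] M) →ₗ[R] ⨁ i, Y i ⊗[R] M :=
  (directSumLeft R R Y M).toLinearMap ∘ₗ F.rTensor M ∘ₗ (directSumLeft R R X M).symm.toLinearMap

lemma directSumRTensor_comp (G : (⨁ i, Y i) →ₗ[R] ⨁ i, Z i) (F : (⨁ i, X i) →ₗ[R] ⨁ i, Y i) :
    directSumRTensor M G ∘ₗ directSumRTensor M F = directSumRTensor M (G ∘ₗ F) := by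
  refine LinearMap.ext fun x => ?_
  simp [directSumRTensor, LinearMap.rTensor_comp_apply]

lemma directSumRTensor_zero : directSumRTensor M (0 : (⨁ i, X i) →ₗ[R] ⨁ i, Y i) = 0 := by
  simp [directSumRTensor]

lemma component_comp_directSumRTensor_comp_lof (F : (⨁ i, X i) →ₗ[R] ⨁ i, Y i) (i l : ι) :
    component R ι _ l ∘ₗ directSumRTensor M F ∘ₗ lof R ι (fun i => X i ⊗[R] M) i
      = (component R ι Y l ∘ₗ F ∘ₗ lof R ι X i).rTensor M := by
  ext x m
  simp [directSumRTensor, ← apply_eq_component]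

lemma directSumRTensor_lof_apply_eq_zero {F : (⨁ i, X i) →ₗ[R] ⨁ i, Y i} {i l : ι}
    (hF : ∀ x, F (lof R ι X i x) l = 0) (x : X i ⊗[R] M) :
    directSumRTensor M F (lof R ι _ i x) l = 0 := by
  have h := LinearMap.congr_fun (component_comp_directSumRTensor_comp_lof M F i l) x
  rwa [show component R ι Y l ∘ₗ F ∘ₗ lof R ι X i = 0 from LinearMap.ext hF,
    LinearMap.rTensor_zero] at h

end DirectSumRTensor

lemma tensorQ_eq_directSumRTensor (k : ℤ) (X : ℤ → ℤ → Type) [∀ i j, AddCommGroup (X i j)]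
    (d : ∀ j : ℤ, (⨁ i, X i j) →ₗ[ℤ] ⨁ i, X i (j + k)) (M : Type) [AddCommGroup M] (j : ℤ) :
    tensorQ k X d M j = directSumRTensor M (d j) := rfl

lemma tensorG_eq_directSumRTensor (X Y : ℤ → ℤ → Type) [∀ i j, AddCommGroup (X i j)]
    [∀ i j, AddCommGroup (Y i j)] (γ : ∀ j : ℤ, (⨁ i, X i j) →ₗ[ℤ] ⨁ i, Y i j)
    (M : Type) [AddCommGroup M] (j : ℤ) :
    tensorG X Y γ M j = directSumRTensor M (γ j) := rfl

/-- Tensoring a `P`-quasi-isomorphism of `Q(k)`-objects of free abelian groups with an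
abelian group `M`: `(X ⊗ M, d ⊗ id)` and `(X̂ ⊗ M, d̂ ⊗ id)` are again `Q(k)`-objects,
their leading parts are `e ⊗ id` and `ê ⊗ id`, the map `γ ⊗ id` satisfies the same
compatibilities, and `δ ⊗ id` still induces isomorphisms on the homology of the
leading-part complexes (stated elementwise). -/
theorem stmt_12 (k : ℤ)
    (X Xh : ℤ → ℤ → Type) [∀ i j, AddCommGroup (X i j)] [∀ i j, AddCommGroup (Xh i j)]
    [∀ i j, Module.Free ℤ (X i j)] [∀ i j, Module.Free ℤ (Xh i j)]
    (d : ∀ j : ℤ, (⨁ i, X i j) →ₗ[ℤ] ⨁ i, X i (j + k))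
    (dh : ∀ j : ℤ, (⨁ i, Xh i j) →ₗ[ℤ] ⨁ i, Xh i (j + k))
    (hdd : ∀ j, d (j + k) ∘ₗ d j = 0)
    (hfilt : ∀ (j i : ℤ) (x : X i j) (l : ℤ), l ≤ i →
      (d j (DirectSum.lof ℤ ℤ (fun l => X l j) i x)) l = 0)
    (hddh : ∀ j, dh (j + k) ∘ₗ dh j = 0)
    (hfilth : ∀ (j i : ℤ) (x : Xh i j) (l : ℤ), l ≤ i →
      (dh j (DirectSum.lof ℤ ℤ (fun l => Xh l j) i x)) l = 0)
    (γ : ∀ j : ℤ, (⨁ i, X i j) →ₗ[ℤ] ⨁ i, Xh i j)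
    (hγd : ∀ j, γ (j + k) ∘ₗ d j = dh j ∘ₗ γ j)
    (hγfilt : ∀ (j i : ℤ) (x : X i j) (l : ℤ), l < i →
      (γ j (DirectSum.lof ℤ ℤ (fun l => X l j) i x)) l = 0)
    (hiso : ∀ i j : ℤ,
      (∀ x : X (i + 1) (j + k), x ∈ LinearMap.ker (leadingPart ℤ k X d (i + 1) (j + k)) →
        diagPart ℤ X Xh γ (i + 1) (j + k) x ∈ LinearMap.range (leadingPart ℤ k Xh dh i j) →
        x ∈ LinearMap.range (leadingPart ℤ k X d i j)) ∧
      (∀ y : Xh (i + 1) (j + k), y ∈ LinearMap.ker (leadingPart ℤ k Xh dh (i + 1) (j + k)) →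
        ∃ x ∈ LinearMap.ker (leadingPart ℤ k X d (i + 1) (j + k)),
          diagPart ℤ X Xh γ (i + 1) (j + k) x - y
            ∈ LinearMap.range (leadingPart ℤ k Xh dh i j)))
    (M : Type) [AddCommGroup M] :
    -- (1) `(X ⊗ M, d ⊗ id)` is a `Q(k)`-object …
    (∀ j, tensorQ k X d M (j + k) ∘ₗ tensorQ k X d M j = 0) ∧
    (∀ (j i : ℤ) (x : (X i j) ⊗[ℤ] M) (l : ℤ), l ≤ i →
      (tensorQ k X d M j (DirectSum.lof ℤ ℤ (fun l => (X l j) ⊗[ℤ] M) i x)) l = 0) ∧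
    -- … and so is `(X̂ ⊗ M, d̂ ⊗ id)`, …
    (∀ j, tensorQ k Xh dh M (j + k) ∘ₗ tensorQ k Xh dh M j = 0) ∧
    (∀ (j i : ℤ) (x : (Xh i j) ⊗[ℤ] M) (l : ℤ), l ≤ i →
      (tensorQ k Xh dh M j (DirectSum.lof ℤ ℤ (fun l => (Xh l j) ⊗[ℤ] M) i x)) l = 0) ∧
    -- (2) their leading parts are `e ⊗ id_M` and `ê ⊗ id_M`, …
    (∀ i j : ℤ, leadingPart ℤ k (fun i j => (X i j) ⊗[ℤ] M) (tensorQ k X d M) i j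
      = LinearMap.rTensor M (leadingPart ℤ k X d i j)) ∧
    (∀ i j : ℤ, leadingPart ℤ k (fun i j => (Xh i j) ⊗[ℤ] M) (tensorQ k Xh dh M) i j
      = LinearMap.rTensor M (leadingPart ℤ k Xh dh i j)) ∧
    -- (3) `γ ⊗ id_M` satisfies the same compatibilities, …
    (∀ j, tensorG X Xh γ M (j + k) ∘ₗ tensorQ k X d M j
      = tensorQ k Xh dh M j ∘ₗ tensorG X Xh γ M j) ∧
    (∀ (j i : ℤ) (x : (X i j) ⊗[ℤ] M) (l : ℤ), l < i →
      (tensorG X Xh γ M j (DirectSum.lof ℤ ℤ (fun l => (X l j) ⊗[ℤ] M) i x)) l = 0) ∧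
    -- (4) and `δ ⊗ id_M` induces isomorphisms on the homology of the leading parts.
    (∀ i j : ℤ,
      (∀ x : (X (i + 1) (j + k)) ⊗[ℤ] M,
        x ∈ LinearMap.ker (LinearMap.rTensor M (leadingPart ℤ k X d (i + 1) (j + k))) →
        LinearMap.rTensor M (diagPart ℤ X Xh γ (i + 1) (j + k)) x
          ∈ LinearMap.range (LinearMap.rTensor M (leadingPart ℤ k Xh dh i j)) →
        x ∈ LinearMap.range (LinearMap.rTensor M (leadingPart ℤ k X d i j))) ∧
      (∀ y : (Xh (i + 1) (j + k)) ⊗[ℤ] M,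
        y ∈ LinearMap.ker (LinearMap.rTensor M (leadingPart ℤ k Xh dh (i + 1) (j + k))) →
        ∃ x ∈ LinearMap.ker (LinearMap.rTensor M (leadingPart ℤ k X d (i + 1) (j + k))),
          LinearMap.rTensor M (diagPart ℤ X Xh γ (i + 1) (j + k)) x - y
            ∈ LinearMap.range (LinearMap.rTensor M (leadingPart ℤ k Xh dh i j)))) := by
  have hsq := leadingPart_comp_leadingPart k hdd hfilt
  have hsqh := leadingPart_comp_leadingPart k hddh hfilth
  have hcomm := diagPart_comp_leadingPart k hfilt hfilth hγd hγfilt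
  have hs : Function.Surjective fun p : ℤ × ℤ => (p.1 + 1, p.2 + k) :=
    fun p => ⟨(p.1 - 1, p.2 - k), by simp⟩
  have hM := homologyBijectiveAt_rTensor (s := fun p : ℤ × ℤ => (p.1 + 1, p.2 + k))
    (C := fun p => X p.1 p.2) (D := fun p => Xh p.1 p.2) (d := fun p => leadingPart ℤ k X d p.1 p.2)
    (e := fun p => leadingPart ℤ k Xh dh p.1 p.2) (φ := fun p => diagPart ℤ X Xh γ p.1 p.2) M hs
    (fun p => hsq p.1 p.2) (fun p => hsqh p.1 p.2) (fun p => hcomm p.1 p.2) (fun p => hiso p.1 p.2)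
  simp only [tensorQ_eq_directSumRTensor, tensorG_eq_directSumRTensor, directSumRTensor_comp]
  exact ⟨fun j => by rw [hdd, directSumRTensor_zero],
    fun j i x l hl => directSumRTensor_lof_apply_eq_zero M (F := d j) (fun y => hfilt j i y l hl) x,
    fun j => by rw [hddh, directSumRTensor_zero],
    fun j i x l hl =>
      directSumRTensor_lof_apply_eq_zero M (F := dh j) (fun y => hfilth j i y l hl) x,
    fun i j => component_comp_directSumRTensor_comp_lof M (d j) i (i + 1),
    fun i j => component_comp_directSumRTensor_comp_lof M (dh j) i (i + 1),
    fun j => by rw [hγd],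
    fun j i x l hl =>
      directSumRTensor_lof_apply_eq_zero M (F := γ j) (fun y => hγfilt j i y l hl) x,
    fun i j => hM (i, j)⟩
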